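/- The tensor commutation matrix 2⊗3 is given in terms of the Pauli matrices σ₁,σ₂,σ₃ and Gell-Mann matrices λ₁,…,λ₈ by: U_{2⊗3} = ((1/2)I₂ + (1/2)σ₃) ⊗ ((1/3)I₃ + (1/2)λ₃ + (√3/6)λ₈) + ((1/2)σ₁ + (i/2)σ₂) ⊗ ((1/2)λ₁ − (i/2)λ₂) + ((1/2)I₂ + (1/2)σ₃) ⊗ ((1/2)λ₆ − (i/2)λ₇) + ((1/2)I₂ − (1/2)σ₃) ⊗ ((1/2)λ₁ + (i/2)λ₂) + ((1/2)σ₁ − (i/2)σ₂) ⊗ ((1/2)λ₆ + (i/2)λ₇) + ((1/2)I₂ − (1/2)σ₃) ⊗ ((1/3)I₃ − (√3/3)λ₈). -/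

import Mathlib

open Matrix

noncomputable def pauli1 : Matrix (Fin 2) (Fin 2) ℂ := !![0, 1; 1, 0]
noncomputable def pauli2 : Matrix (Fin 2) (Fin 2) ℂ := !![0, -Complex.I; Complex.I, 0]
noncomputable def pauli3 : Matrix (Fin 2) (Fin 2) ℂ := !![1, 0; 0, -1]

noncomputable def gm1 : Matrix (Fin 3) (Fin 3) ℂ :=
  Matrix.single 0 1 1 + Matrix.single 1 0 1
noncomputable def gm2 : Matrix (Fin 3) (Fin 3) ℂ :=
  (-Complex.I) • Matrix.single 0 1 1 + Complex.I • Matrix.single 1 0 1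
noncomputable def gm3 : Matrix (Fin 3) (Fin 3) ℂ :=
  Matrix.single 0 0 1 - Matrix.single 1 1 1
noncomputable def gm6 : Matrix (Fin 3) (Fin 3) ℂ :=
  Matrix.single 1 2 1 + Matrix.single 2 1 1
noncomputable def gm7 : Matrix (Fin 3) (Fin 3) ℂ :=
  (-Complex.I) • Matrix.single 1 2 1 + Complex.I • Matrix.single 2 1 1
noncomputable def gm8 : Matrix (Fin 3) (Fin 3) ℂ :=
  ((Real.sqrt 3 : ℝ) : ℂ)⁻¹ •
    (Matrix.single 0 0 1 + Matrix.single 1 1 1 - (2 : ℂ) • Matrix.single 2 2 1)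

/-- The Kronecker product `A ⊗ B` of a 2×2 matrix with a 3×3 matrix, realized
as a 6×6 matrix with rows and columns flattened lexicographically:
`(A ⊗ B)_{(i₁,i₂),(j₁,j₂)} = A_{i₁ j₁} B_{i₂ j₂}` at row `3·i₁+i₂`,
column `3·j₁+j₂` (zero-based). -/
noncomputable def kron23 (A : Matrix (Fin 2) (Fin 2) ℂ) (B : Matrix (Fin 3) (Fin 3) ℂ) :
    Matrix (Fin 6) (Fin 6) ℂ :=
  Matrix.of fun r s =>
    A ⟨(r : ℕ) / 3, by have := r.isLt; omega⟩ ⟨(s : ℕ) / 3, by have := s.isLt; omega⟩ *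
      B ⟨(r : ℕ) % 3, by omega⟩ ⟨(s : ℕ) % 3, by omega⟩

/-- The Kronecker product `a ⊗ b ∈ ℂ⁶` of column vectors `a ∈ ℂ²`, `b ∈ ℂ³`. -/
noncomputable def vecKron23 (a : Fin 2 → ℂ) (b : Fin 3 → ℂ) : Fin 6 → ℂ :=
  fun r => a ⟨(r : ℕ) / 3, by have := r.isLt; omega⟩ * b ⟨(r : ℕ) % 3, by omega⟩

/-- The Kronecker product `a ⊗ b ∈ ℂ⁶` of column vectors `a ∈ ℂ³`, `b ∈ ℂ²`. -/
noncomputable def vecKron32 (a : Fin 3 → ℂ) (b : Fin 2 → ℂ) : Fin 6 → ℂ :=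
  fun r => a ⟨(r : ℕ) / 2, by have := r.isLt; omega⟩ * b ⟨(r : ℕ) % 2, by omega⟩

/-!
The vectors `e_i ⊗ e_j` are exactly the standard basis vectors of `ℂ⁶`, so `U` is determined
by `U (e_i ⊗ e_j) = e_j ⊗ e_i`: it is the permutation matrix of `(i, j) ↦ (j, i)` on flattened
indices. On the other side, each bracketed combination of Pauli or Gell-Mann matrices is a matrix
unit `E_ij`, and `E_ij ⊗ E_kl` is again a matrix unit, so the right-hand side is a sum of six
matrix units, which is that permutation matrix.
-/

open scoped Kronecker

section TensorCommutation

variable {R : Type*} {m n : ℕ}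

def vecKron [Mul R] (a : Fin m → R) (b : Fin n → R) : Fin (m * n) → R :=
  fun r => a (finProdFinEquiv.symm r).1 * b (finProdFinEquiv.symm r).2

-- `i + m * j ↦ j + n * i`: transposition of an `n × m` array stored row-major.
variable (m n) in
def finMulComm : Fin (n * m) ≃ Fin (m * n) :=
  finProdFinEquiv.symm.trans ((Equiv.prodComm _ _).trans finProdFinEquiv)

variable (R m n) in
def tensorCommMatrix [Zero R] [One R] :
    Matrix (Fin (n * m)) (Fin (m * n)) R :=
  (finMulComm m n).toPEquiv.toMatrix

variable [CommSemiring R]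

theorem vecKron_single_one_single_one (i : Fin m) (j : Fin n) :
    vecKron (Pi.single i (1 : R)) (Pi.single j 1) = Pi.single (finProdFinEquiv (i, j)) 1 := by
  ext r
  simp only [vecKron, Pi.single_apply, ite_zero_mul_ite_zero, one_mul, ← Equiv.symm_apply_eq,
    Prod.ext_iff]

theorem tensorCommMatrix_mulVec_vecKron (a : Fin m → R) (b : Fin n → R) :
    tensorCommMatrix R m n *ᵥ vecKron a b = vecKron b a := by
  ext r
  simp [tensorCommMatrix, PEquiv.toMatrix_toPEquiv_mulVec, vecKron, finMulComm, mul_comm]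

theorem eq_tensorCommMatrix_of_mulVec_vecKron {U : Matrix (Fin (n * m)) (Fin (m * n)) R}
    (hU : ∀ a b, U *ᵥ vecKron a b = vecKron b a) : U = tensorCommMatrix R m n := by
  refine ext_of_mulVec_single fun s => ?_
  obtain ⟨⟨i, j⟩, rfl⟩ := finProdFinEquiv.surjective s
  rw [← vecKron_single_one_single_one, hU, tensorCommMatrix_mulVec_vecKron]

end TensorCommutation

theorem tensorCommMatrix_two_three {R : Type*} [AddMonoidWithOne R] :
    tensorCommMatrix R 2 3 = (single 0 0 1 + single 1 3 1 + single 2 1 1 + single 3 4 1 +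
      single 4 2 1 + single 5 5 1 : Matrix (Fin 6) (Fin 6) R) := by
  ext r s
  fin_cases r <;> fin_cases s <;> simp +decide [tensorCommMatrix, PEquiv.toMatrix_apply]

theorem kron23_eq_submatrix_kronecker (A : Matrix (Fin 2) (Fin 2) ℂ)
    (B : Matrix (Fin 3) (Fin 3) ℂ) :
    kron23 A B = (A ⊗ₖ B).submatrix finProdFinEquiv.symm finProdFinEquiv.symm :=
  rfl

theorem kron23_single_single (i j : Fin 2) (k l : Fin 3) :
    kron23 (single i j 1) (single k l 1) =
      single (finProdFinEquiv (i, k)) (finProdFinEquiv (j, l)) 1 := by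
  rw [kron23_eq_submatrix_kronecker, single_kronecker_single, submatrix_single_equiv,
    Equiv.symm_symm, mul_one]

theorem half_one_add_half_pauli3 : (1 / 2 : ℂ) • 1 + (1 / 2 : ℂ) • pauli3 = single 0 0 1 := by
  ext i j
  fin_cases i <;> fin_cases j <;> norm_num [pauli3, one_apply]

theorem half_one_sub_half_pauli3 : (1 / 2 : ℂ) • 1 - (1 / 2 : ℂ) • pauli3 = single 1 1 1 := by
  ext i j
  fin_cases i <;> fin_cases j <;> norm_num [pauli3, one_apply]

theorem half_pauli1_add_half_I_pauli2 :
    (1 / 2 : ℂ) • pauli1 + (Complex.I / 2) • pauli2 = single 0 1 1 := by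
  ext i j
  fin_cases i <;> fin_cases j <;> simp +decide [pauli1, pauli2] <;> field_simp <;> norm_num

theorem half_pauli1_sub_half_I_pauli2 :
    (1 / 2 : ℂ) • pauli1 - (Complex.I / 2) • pauli2 = single 1 0 1 := by
  ext i j
  fin_cases i <;> fin_cases j <;> simp +decide [pauli1, pauli2] <;> field_simp <;> norm_num

theorem half_gm1_add_half_I_gm2 : (1 / 2 : ℂ) • gm1 + (Complex.I / 2) • gm2 = single 0 1 1 := by
  ext i j
  fin_cases i <;> fin_cases j <;> simp +decide [gm1, gm2] <;> field_simp <;> norm_num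

theorem half_gm1_sub_half_I_gm2 : (1 / 2 : ℂ) • gm1 - (Complex.I / 2) • gm2 = single 1 0 1 := by
  ext i j
  fin_cases i <;> fin_cases j <;> simp +decide [gm1, gm2] <;> field_simp <;> norm_num

theorem half_gm6_add_half_I_gm7 : (1 / 2 : ℂ) • gm6 + (Complex.I / 2) • gm7 = single 1 2 1 := by
  ext i j
  fin_cases i <;> fin_cases j <;> simp +decide [gm6, gm7] <;> field_simp <;> norm_num

theorem half_gm6_sub_half_I_gm7 : (1 / 2 : ℂ) • gm6 - (Complex.I / 2) • gm7 = single 2 1 1 := by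
  ext i j
  fin_cases i <;> fin_cases j <;> simp +decide [gm6, gm7] <;> field_simp <;> norm_num

theorem third_one_add_half_gm3_add_gm8 :
    (1 / 3 : ℂ) • 1 + (1 / 2 : ℂ) • gm3 + ((Real.sqrt 3 : ℂ) / 6) • gm8 = single 0 0 1 := by
  ext i j
  fin_cases i <;> fin_cases j <;> simp +decide [gm3, gm8, one_apply] <;> field_simp <;> norm_num

theorem third_one_sub_gm8 :
    (1 / 3 : ℂ) • 1 - ((Real.sqrt 3 : ℂ) / 3) • gm8 = single 2 2 1 := by
  ext i j
  fin_cases i <;> fin_cases j <;> simp +decide [gm8, one_apply] <;> field_simp <;> norm_num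

/-- the tensor commutation matrix `U_{2⊗3}` (the 6×6 matrix
satisfying `U(a ⊗ b) = b ⊗ a` for all `a ∈ ℂ²`, `b ∈ ℂ³`) is given in terms of
the Pauli and Gell-Mann matrices by the six-term Kronecker-product formula. -/
theorem stmt13 (U : Matrix (Fin 6) (Fin 6) ℂ)
    (hU : ∀ (a : Fin 2 → ℂ) (b : Fin 3 → ℂ), U.mulVec (vecKron23 a b) = vecKron32 b a) :
    U = kron23 ((1 / 2 : ℂ) • 1 + (1 / 2 : ℂ) • pauli3)
          ((1 / 3 : ℂ) • 1 + (1 / 2 : ℂ) • gm3 + ((Real.sqrt 3 : ℂ) / 6) • gm8)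
        + kron23 ((1 / 2 : ℂ) • pauli1 + (Complex.I / 2) • pauli2)
          ((1 / 2 : ℂ) • gm1 - (Complex.I / 2) • gm2)
        + kron23 ((1 / 2 : ℂ) • 1 + (1 / 2 : ℂ) • pauli3)
          ((1 / 2 : ℂ) • gm6 - (Complex.I / 2) • gm7)
        + kron23 ((1 / 2 : ℂ) • 1 - (1 / 2 : ℂ) • pauli3)
          ((1 / 2 : ℂ) • gm1 + (Complex.I / 2) • gm2)
        + kron23 ((1 / 2 : ℂ) • pauli1 - (Complex.I / 2) • pauli2)
          ((1 / 2 : ℂ) • gm6 + (Complex.I / 2) • gm7)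
        + kron23 ((1 / 2 : ℂ) • 1 - (1 / 2 : ℂ) • pauli3)
          ((1 / 3 : ℂ) • 1 - ((Real.sqrt 3 : ℂ) / 3) • gm8) := by
  -- `vecKron23` and `vecKron32` are `vecKron` up to unfolding `finProdFinEquiv.symm`.
  rw [eq_tensorCommMatrix_of_mulVec_vecKron hU, tensorCommMatrix_two_three,
    half_one_add_half_pauli3, half_one_sub_half_pauli3, half_pauli1_add_half_I_pauli2,
    half_pauli1_sub_half_I_pauli2, half_gm1_add_half_I_gm2, half_gm1_sub_half_I_gm2,
    half_gm6_add_half_I_gm7, half_gm6_sub_half_I_gm7, third_one_add_half_gm3_add_gm8,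
    third_one_sub_gm8]
  simp only [kron23_single_single]
  -- closes by evaluating the indices, e.g. `finProdFinEquiv (0, 1) = 1`
  rfl
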